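/- Fix σ² > 0, matrices F (N_I × M_E), H (N_I × M_I), and a positive semidefinite M_I × M_I matrix S_I, and define R(S_E, S_I) = log₂ det(I + (F S_E Fᴴ + σ² I)^{-1} H S_I Hᴴ). Let S_{E,1}, …, S_{E,d} be M_E × M_E positive semidefinite matrices and θ_1, …, θ_d ≥ 0 with Σ θ_i = 1. Then Σ_{i=1}^{d} θ_i · R(S_{E,i}, S_I) ≥ R(Σ_{i=1}^{d} θ_i S_{E,i}, S_I). -/

import Mathlib

/-!
With `P = F S_E Fᴴ + σ² I`, which is affine in `S_E`, and `Q = H S_I Hᴴ`, the rate is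
`(log det (P + Q) - log det P) / log 2`, so by Jensen's inequality it suffices that
`P ↦ log det (P + Q) - log det P` is convex on positive definite matrices.
For `P = a X + b Y`, the Jensen defect `a L(X + tQ) + b L(Y + tQ) - L(P + tQ)` of
`L = log det` has derivative `a τ(X + tQ) + b τ(Y + tQ) - τ(P + tQ)` with `τ(A) = tr (A⁻¹ Q)`.
This is nonnegative because inversion is operator convex (a Schur complement argument) and
`tr (A Q) ≥ 0` for `A, Q ⪰ 0`, so the defect at `t = 1` dominates the one at `t = 0`.
-/

open Matrix BigOperators ComplexOrder

/-- The achievable rate `R(S_E, S_I) = log₂ det(I + (F S_E Fᴴ + σ² I)⁻¹ H S_I Hᴴ)` of the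
MIMO WIT link (in bps/Hz). -/
noncomputable def rateR {NI MEdim MI : ℕ} (σsq : ℝ)
    (F : Matrix (Fin NI) (Fin MEdim) ℂ) (H : Matrix (Fin NI) (Fin MI) ℂ)
    (SE : Matrix (Fin MEdim) (Fin MEdim) ℂ) (SI : Matrix (Fin MI) (Fin MI) ℂ) : ℝ :=
  Real.logb 2 ((1 + (F * SE * Fᴴ + (σsq : ℂ) • 1)⁻¹ * (H * SI * Hᴴ)).det.re)

open scoped MatrixOrder

namespace Matrix

section NontriviallyNormedField

variable {𝕜 : Type*} [NontriviallyNormedField 𝕜] {n : Type*} [Fintype n] [DecidableEq n]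

open Polynomial in
theorem hasDerivAt_det_one_add_smul (B : Matrix n n 𝕜) :
    HasDerivAt (fun s : 𝕜 => (1 + s • B).det) B.trace 0 := by
  have h := (det (1 + (X : 𝕜[X]) • B.map C)).hasDerivAt 0
  rw [derivative_det_one_add_X_smul] at h
  convert h using 1
  ext s
  rw [eval_det]
  congr 1
  ext i j
  simp [Matrix.one_apply, mul_comm]

theorem hasDerivAt_det_add_smul {A : Matrix n n 𝕜} (hA : IsUnit A.det) (Q : Matrix n n 𝕜) :
    HasDerivAt (fun s : 𝕜 => (A + s • Q).det) (A.det * (A⁻¹ * Q).trace) 0 := by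
  have hfactor : ∀ s : 𝕜, A + s • Q = A * (1 + s • (A⁻¹ * Q)) := fun s => by
    rw [Matrix.mul_add, Matrix.mul_one, Matrix.mul_smul, ← Matrix.mul_assoc,
      Matrix.mul_nonsing_inv A hA, Matrix.one_mul]
  simp_rw [hfactor, det_mul]
  exact (hasDerivAt_det_one_add_smul _).const_mul _

end NontriviallyNormedField

section RCLike

variable {𝕜 : Type*} [RCLike 𝕜] {n : Type*} [Fintype n] [DecidableEq n]

theorem PosDef.re_det_pos {A : Matrix n n 𝕜} (hA : A.PosDef) : 0 < RCLike.re A.det :=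
  (RCLike.pos_iff.mp hA.det_pos).1

theorem PosDef.ofReal_re_det {A : Matrix n n 𝕜} (hA : A.PosDef) : (RCLike.re A.det : 𝕜) = A.det :=
  RCLike.conj_eq_iff_re.mp (RCLike.conj_eq_iff_im.mpr (RCLike.pos_iff.mp hA.det_pos).2)

theorem hasDerivAt_log_re_det_add_smul (A Q : Matrix n n 𝕜) {t : ℝ}
    (hA : (A + t • Q).PosDef) :
    HasDerivAt (fun t : ℝ => Real.log (RCLike.re (A + t • Q).det))
      (RCLike.re ((A + t • Q)⁻¹ * Q).trace) t := by
  set A₀ := A + t • Q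
  have hline : ∀ u : ℝ, A + u • Q = A₀ + ((u - t : ℝ) : 𝕜) • Q := fun u => by
    rw [← RCLike.real_smul_eq_coe_smul, sub_smul]; simp only [A₀]; abel
  have hdet : HasDerivAt (fun u : ℝ => (A + u • Q).det) (A₀.det * (A₀⁻¹ * Q).trace) t := by
    simp_rw [hline]
    have h0 := hasDerivAt_det_add_smul (isUnit_iff_isUnit_det _ |>.mp hA.isUnit) Q
    have h1 : HasDerivAt (fun u : ℝ => ((u - t : ℝ) : 𝕜)) 1 t := by
      simpa using (RCLike.ofRealCLM.hasDerivAt (x := t)).sub_const (t : 𝕜)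
    have h0' : HasDerivAt (fun s : 𝕜 => (A₀ + s • Q).det)
        (A₀.det * (A₀⁻¹ * Q).trace) ((t - t : ℝ) : 𝕜) := by
      simpa using h0
    exact (h0'.comp t h1).congr_deriv (mul_one _)
  refine ((RCLike.reCLM.hasFDerivAt.comp_hasDerivAt t hdet).log hA.re_det_pos.ne').congr_deriv ?_
  rw [Function.comp_apply, RCLike.reCLM_apply, ← hA.ofReal_re_det, RCLike.re_ofReal_mul,
    RCLike.ofReal_re]
  field_simp [hA.re_det_pos.ne']

theorem PosSemidef.trace_mul_nonneg {A B : Matrix n n 𝕜} (hA : A.PosSemidef)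
    (hB : B.PosSemidef) : 0 ≤ (A * B).trace := by
  obtain ⟨C, rfl⟩ := CStarAlgebra.nonneg_iff_eq_star_mul_self.mp hB.nonneg
  rw [← Matrix.mul_assoc, trace_mul_cycle, star_eq_conjTranspose]
  exact (hA.mul_mul_conjTranspose_same C).trace_nonneg

omit [Fintype n] [DecidableEq n] in
theorem convex_setOf_posSemidef : Convex ℝ {A : Matrix n n 𝕜 | A.PosSemidef} :=
  fun _ hX _ hY _ _ ha hb _ => (hX.smul ha).add (hY.smul hb)

omit [Fintype n] [DecidableEq n] in
theorem convex_setOf_posDef : Convex ℝ {A : Matrix n n 𝕜 | A.PosDef} := by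
  intro X hX Y hY a b ha hb hab
  rcases ha.eq_or_lt with rfl | ha
  · simpa [show b = 1 by linarith] using hY
  · exact (hX.smul ha).add_posSemidef (hY.posSemidef.smul hb)

theorem posSemidef_fromBlocks_self_one_one_inv {A : Matrix n n 𝕜} (hA : A.PosDef) :
    (fromBlocks A 1 1 A⁻¹).PosSemidef := by
  let _ := hA.isUnit.invertible
  simpa using (PosDef.fromBlocks₁₁ (1 : Matrix n n 𝕜) A⁻¹ hA).mpr (by simpa using PosSemidef.zero)

theorem convexOn_inv : ConvexOn ℝ {A : Matrix n n 𝕜 | A.PosDef} (·⁻¹) := by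
  refine ⟨convex_setOf_posDef, fun X hX Y hY a b ha hb hab => ?_⟩
  have hXY : (a • X + b • Y).PosDef := convex_setOf_posDef hX hY ha hb hab
  let _ := hXY.isUnit.invertible
  have hblocks : (fromBlocks (a • X + b • Y) 1 1 (a • X⁻¹ + b • Y⁻¹)).PosSemidef := by
    have := ((posSemidef_fromBlocks_self_one_one_inv hX).smul ha).add
      ((posSemidef_fromBlocks_self_one_one_inv hY).smul hb)
    rwa [fromBlocks_smul, fromBlocks_smul, fromBlocks_add, ← add_smul, hab, one_smul] at this
  simpa [Matrix.le_iff] using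
    (PosDef.fromBlocks₁₁ 1 (a • X⁻¹ + b • Y⁻¹) hXY).mp (by simpa using hblocks)

theorem convexOn_re_trace_inv_mul {Q : Matrix n n 𝕜} (hQ : Q.PosSemidef) :
    ConvexOn ℝ {A : Matrix n n 𝕜 | A.PosDef} fun A => RCLike.re (A⁻¹ * Q).trace := by
  refine ⟨convex_setOf_posDef, fun X hX Y hY a b ha hb hab => ?_⟩
  have h := (RCLike.nonneg_iff.mp ((convexOn_inv.2 hX hY ha hb hab).trace_mul_nonneg hQ)).1
  simp only [sub_mul, add_mul, smul_mul, trace_sub, trace_add, trace_smul, map_sub, map_add,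
    RCLike.smul_re] at h
  simpa [smul_eq_mul] using h

theorem convexOn_log_det_add_sub_log_det {Q : Matrix n n 𝕜} (hQ : Q.PosSemidef) :
    ConvexOn ℝ {P : Matrix n n 𝕜 | P.PosDef}
      fun P => Real.log (RCLike.re (P + Q).det) - Real.log (RCLike.re P.det) := by
  refine ⟨convex_setOf_posDef, fun X hX Y hY a b ha hb hab => ?_⟩
  let L : Matrix n n 𝕜 → ℝ := fun A => Real.log (RCLike.re A.det)
  let τ : Matrix n n 𝕜 → ℝ := fun A => RCLike.re (A⁻¹ * Q).trace
  let g : ℝ → ℝ := fun t => a * L (X + t • Q) + b * L (Y + t • Q) - L (a • X + b • Y + t • Q)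
  have hray : ∀ {A : Matrix n n 𝕜}, A.PosDef → ∀ t ∈ Set.Ici (0 : ℝ), (A + t • Q).PosDef :=
    fun hA t ht => hA.add_posSemidef (hQ.smul ht)
  have hmix : ∀ t : ℝ, a • X + b • Y + t • Q = a • (X + t • Q) + b • (Y + t • Q) := fun t => by
    calc a • X + b • Y + t • Q = a • X + b • Y + (a + b) • t • Q := by rw [hab, one_smul]
      _ = a • (X + t • Q) + b • (Y + t • Q) := by module
  have hg : ∀ t ∈ Set.Ici (0 : ℝ), HasDerivAt g
      (a * τ (X + t • Q) + b * τ (Y + t • Q) - τ (a • X + b • Y + t • Q)) t := fun t ht =>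
    (((hasDerivAt_log_re_det_add_smul X Q (hray hX t ht)).const_mul a).add
      ((hasDerivAt_log_re_det_add_smul Y Q (hray hY t ht)).const_mul b)).sub
      (hasDerivAt_log_re_det_add_smul _ Q (hray (convex_setOf_posDef hX hY ha hb hab) t ht))
  have hg_nonneg : ∀ t ∈ Set.Ici (0 : ℝ),
      0 ≤ a * τ (X + t • Q) + b * τ (Y + t • Q) - τ (a • X + b • Y + t • Q) := fun t ht => by
    rw [hmix, sub_nonneg]
    exact (convexOn_re_trace_inv_mul hQ).2 (hray hX t ht) (hray hY t ht) ha hb hab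
  have hmono : MonotoneOn g (Set.Ici 0) :=
    monotoneOn_of_hasDerivWithinAt_nonneg (convex_Ici 0)
      (fun t ht => (hg t ht).continuousAt.continuousWithinAt)
      (fun t ht => (hg t (interior_subset ht)).hasDerivWithinAt)
      (fun t ht => hg_nonneg t (interior_subset ht))
  have h01 := hmono Set.self_mem_Ici (Set.mem_Ici.mpr zero_le_one) zero_le_one
  simp only [g, L, zero_smul, add_zero, one_smul] at h01
  simp only [smul_eq_mul]
  linarith

theorem logb_re_det_one_add_inv_mul {P Q : Matrix n n 𝕜} (hP : P.PosDef)
    (hQ : Q.PosSemidef) :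
    Real.logb 2 (RCLike.re (1 + P⁻¹ * Q).det)
      = (Real.log (RCLike.re (P + Q).det) - Real.log (RCLike.re P.det)) / Real.log 2 := by
  have hPQ : (P + Q).PosDef := hP.add_posSemidef hQ
  have hdet : RCLike.re (1 + P⁻¹ * Q).det = (RCLike.re P.det)⁻¹ * RCLike.re (P + Q).det := by
    have hfactor : 1 + P⁻¹ * Q = P⁻¹ * (P + Q) := by
      rw [Matrix.mul_add, nonsing_inv_mul P (isUnit_iff_isUnit_det _ |>.mp hP.isUnit)]
    rw [hfactor, det_mul, det_nonsing_inv, Ring.inverse_eq_inv, ← hP.ofReal_re_det,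
      ← RCLike.ofReal_inv, RCLike.re_ofReal_mul, RCLike.ofReal_re]
  rw [hdet, Real.logb, Real.log_mul (inv_ne_zero hP.re_det_pos.ne') hPQ.re_det_pos.ne',
    Real.log_inv, neg_add_eq_sub]

end RCLike

end Matrix

theorem convexOn_rateR {NI MEdim MI : ℕ} {σsq : ℝ} (hσ : 0 < σsq)
    (F : Matrix (Fin NI) (Fin MEdim) ℂ) (H : Matrix (Fin NI) (Fin MI) ℂ)
    {SI : Matrix (Fin MI) (Fin MI) ℂ} (hSI : SI.PosSemidef) :
    ConvexOn ℝ {SE : Matrix (Fin MEdim) (Fin MEdim) ℂ | SE.PosSemidef}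
      fun SE => rateR σsq F H SE SI := by
  let P : Matrix (Fin MEdim) (Fin MEdim) ℂ → Matrix (Fin NI) (Fin NI) ℂ :=
    fun SE => F * SE * Fᴴ + σsq • 1
  have hQ : (H * SI * Hᴴ).PosSemidef := hSI.mul_mul_conjTranspose_same H
  have hP : ∀ SE : Matrix (Fin MEdim) (Fin MEdim) ℂ, SE.PosSemidef → (P SE).PosDef :=
    fun SE hSE => PosDef.posSemidef_add (hSE.mul_mul_conjTranspose_same F) (PosDef.one.smul hσ)
  have hrate : ∀ SE, SE.PosSemidef → rateR σsq F H SE SI = (Real.log 2)⁻¹ *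
      (Real.log (RCLike.re (P SE + H * SI * Hᴴ).det) - Real.log (RCLike.re (P SE).det)) :=
    fun SE hSE => by
      rw [rateR, Complex.coe_smul, inv_mul_eq_div]
      exact logb_re_det_one_add_inv_mul (hP SE hSE) hQ
  have hP_mix : ∀ (X Y : Matrix (Fin MEdim) (Fin MEdim) ℂ) (a b : ℝ), a + b = 1 →
      P (a • X + b • Y) = a • P X + b • P Y := fun X Y a b hab => by
    calc P (a • X + b • Y) = a • (F * X * Fᴴ) + b • (F * Y * Fᴴ) + (a + b) • σsq • 1 := by
          simp only [P, Matrix.mul_add, Matrix.add_mul, Matrix.mul_smul, Matrix.smul_mul, hab,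
            one_smul]
      _ = a • P X + b • P Y := by module
  refine ⟨convex_setOf_posSemidef, fun X hX Y hY a b ha hb hab => ?_⟩
  have h := ((convexOn_log_det_add_sub_log_det hQ).smul
    (inv_nonneg.mpr (Real.log_nonneg one_le_two))).2 (hP X hX) (hP Y hY) ha hb hab
  show rateR σsq F H (a • X + b • Y) SI ≤ a * rateR σsq F H X SI + b * rateR σsq F H Y SI
  rw [hrate X hX, hrate Y hY, hrate _ (convex_setOf_posSemidef hX hY ha hb hab), hP_mix X Y a b hab]
  exact h

/-- Jensen-type inequality for the WIT rate as a function of the energy covariance: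
for positive semidefinite `S_{E,1}, …, S_{E,d}` and convex weights `θ_i`,
`∑ i, θ_i R(S_{E,i}, S_I) ≥ R(∑ i, θ_i S_{E,i}, S_I)`. -/
theorem rate_time_sharing_jensen
    (NI MEdim MI d : ℕ) (σsq : ℝ) (hσ : 0 < σsq)
    (F : Matrix (Fin NI) (Fin MEdim) ℂ) (H : Matrix (Fin NI) (Fin MI) ℂ)
    (SI : Matrix (Fin MI) (Fin MI) ℂ) (hSI : SI.PosSemidef)
    (SE : Fin d → Matrix (Fin MEdim) (Fin MEdim) ℂ)
    (hSE : ∀ i, (SE i).PosSemidef)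
    (θ : Fin d → ℝ) (hθ : ∀ i, 0 ≤ θ i) (hθsum : ∑ i, θ i = 1) :
    ∑ i, θ i * rateR σsq F H (SE i) SI
      ≥ rateR σsq F H (∑ i, θ i • SE i) SI := by
  simpa only [smul_eq_mul] using (convexOn_rateR hσ F H hSI).map_sum_le (fun i _ => hθ i) hθsum
    (fun i _ => hSE i)
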